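/- For every 2-uniform hypergraph H, the following are equivalent: (1) H is dually conformal; (2) there exists a finite simple graph G with vertex set V(H), with τ_c^+(G) = 2 and without universal vertices, such that the hyperedges of H are exactly the minimal clique transversals of G. -/

import Mathlib

open Finset
open scoped Classical

variable {V : Type*} [Fintype V] [DecidableEq V]

/-- A hypergraph on vertex set `V` is given by its finite set of hyperedges `E`;
the condition that every vertex belongs to at least one hyperedge. -/
def Covers (E : Finset (Finset V)) : Prop := ∀ v : V, ∃ e ∈ E, v ∈ e

/-- A hypergraph is Sperner if no hyperedge is contained in another hyperedge. -/
def SpernerHG (E : Finset (Finset V)) : Prop := ∀ e ∈ E, ∀ f ∈ E, e ⊆ f → e = f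

/-- A transversal of a hypergraph: a set of vertices intersecting all hyperedges. -/
def IsTransversal (E : Finset (Finset V)) (T : Finset V) : Prop := ∀ e ∈ E, (e ∩ T).Nonempty

/-- A minimal transversal: a transversal not properly containing another transversal. -/
def IsMinTransversal (E : Finset (Finset V)) (T : Finset V) : Prop :=
  IsTransversal E T ∧ ∀ T' ⊆ T, IsTransversal E T' → T' = T

/-- The dual hypergraph: its hyperedges are exactly the minimal transversals. -/
noncomputable def dualHG (E : Finset (Finset V)) : Finset (Finset V) :=
  Finset.univ.filter fun T => IsMinTransversal E T

/-- The co-occurrence graph of a hypergraph: two distinct vertices are adjacent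
iff some hyperedge contains both. -/
def coocGraph (E : Finset (Finset V)) : SimpleGraph V where
  Adj u v := u ≠ v ∧ ∃ e ∈ E, u ∈ e ∧ v ∈ e
  symm := by
    constructor
    rintro u v ⟨huv, e, he, hu, hv⟩
    exact ⟨Ne.symm huv, e, he, hv, hu⟩
  loopless := by
    constructor
    rintro v ⟨hv, -⟩
    exact hv rfl

/-- A maximal clique of a graph: a clique not properly contained in any other clique. -/
def IsMaxClique (G : SimpleGraph V) (C : Finset V) : Prop :=
  G.IsClique (C : Set V) ∧ ∀ D : Finset V, G.IsClique (D : Set V) → C ⊆ D → D = C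

/-- A hypergraph is conformal if every maximal clique of its co-occurrence graph
is a hyperedge. -/
def ConformalHG (E : Finset (Finset V)) : Prop :=
  ∀ C : Finset V, IsMaxClique (coocGraph E) C → C ∈ E

/-- A hypergraph is dually conformal if its dual hypergraph is conformal. -/
def DuallyConformalHG (E : Finset (Finset V)) : Prop :=
  ConformalHG (dualHG E)

/-- A clique transversal of a graph: a set of vertices meeting all maximal cliques. -/
def IsCliqueTransversal (G : SimpleGraph V) (X : Finset V) : Prop :=
  ∀ C : Finset V, IsMaxClique G C → (C ∩ X).Nonempty

/-- A minimal clique transversal: a clique transversal not properly containing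
another clique transversal. -/
def IsMinCliqueTransversal (G : SimpleGraph V) (X : Finset V) : Prop :=
  IsCliqueTransversal G X ∧ ∀ Y ⊆ X, IsCliqueTransversal G Y → Y = X

/-- The upper clique transversal number: the maximum size of a minimal clique
transversal. -/
noncomputable def uct (G : SimpleGraph V) : ℕ :=
  (Finset.univ.filter fun X : Finset V => IsMinCliqueTransversal G X).sup Finset.card

/-!
For a Sperner hypergraph `E` we have `(E^d)^d = E`, and the maximal cliques of a graph `G` form a
Sperner hypergraph whose co-occurrence graph is `G`. A Sperner hypergraph `F` is conformal iff it
is the family of maximal cliques of its co-occurrence graph. Hence `E` is dually conformal iff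
`E^d` is the family of maximal cliques of some graph `G`, and then the minimal clique transversals
of `G` are the hyperedges of `E^dd = E`, all of size 2. A universal vertex `v` of `G` would lie in
every maximal clique, i.e. in every minimal transversal of `E`; but `V \ {v}` meets every
2-element hyperedge, so it contains a minimal transversal avoiding `v`.
-/

section Transversals

variable {E : Finset (Finset V)} {T : Finset V}

lemma mem_dualHG : T ∈ dualHG E ↔ IsMinTransversal E T := by
  simp [dualHG]

omit [Fintype V] in
lemma isMinTransversal_iff_minimal : IsMinTransversal E T ↔ Minimal (IsTransversal E) T := by
  rw [IsMinTransversal, minimal_iff]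
  exact and_congr_right fun _ =>
    ⟨fun h _ hT' hT'T => (h _ hT'T hT').symm, fun h _ hT'T hT' => (h hT' hT'T).symm⟩

omit [Fintype V] in
lemma IsTransversal.exists_isMinTransversal_subset (hT : IsTransversal E T) :
    ∃ T' ⊆ T, IsMinTransversal E T' := by
  simpa only [isMinTransversal_iff_minimal] using exists_minimal_le_of_wellFoundedLT _ T hT

lemma isTransversal_dualHG_of_mem {e : Finset V} (he : e ∈ E) : IsTransversal (dualHG E) e :=
  fun T hT => inter_comm e T ▸ (mem_dualHG.1 hT).1 e he

lemma spernerHG_dualHG (E : Finset (Finset V)) : SpernerHG (dualHG E) :=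
  fun _ hT _ hT' hTT' => (mem_dualHG.1 hT').2 _ hTT' (mem_dualHG.1 hT).1

lemma exists_isMinTransversal_not_mem {v : V} (h : ∀ e ∈ E, ∃ u ∈ e, u ≠ v) :
    ∃ T, IsMinTransversal E T ∧ v ∉ T := by
  have hT : IsTransversal E (univ.erase v) := fun e he =>
    let ⟨u, hue, huv⟩ := h e he
    ⟨u, mem_inter.2 ⟨hue, mem_erase.2 ⟨huv, mem_univ u⟩⟩⟩
  obtain ⟨T, hTv, hT⟩ := hT.exists_isMinTransversal_subset
  exact ⟨T, hT, fun hv => (mem_erase.1 (hTv hv)).1 rfl⟩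

/-- The complement of `T` would be a transversal of `E`, hence contain a minimal one that `T`
misses. -/
lemma IsTransversal.exists_mem_subset_of_dualHG (hT : IsTransversal (dualHG E) T) :
    ∃ e ∈ E, e ⊆ T := by
  by_contra! h
  have hTc : IsTransversal E (univ \ T) := fun e he =>
    let ⟨x, hxe, hxT⟩ := not_subset.1 (h e he)
    ⟨x, mem_inter.2 ⟨hxe, mem_sdiff.2 ⟨mem_univ x, hxT⟩⟩⟩
  obtain ⟨T', hT'T, hT'⟩ := hTc.exists_isMinTransversal_subset
  obtain ⟨x, hx⟩ := hT T' (mem_dualHG.2 hT')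
  rw [mem_inter] at hx
  exact (mem_sdiff.1 (hT'T hx.1)).2 hx.2

lemma SpernerHG.exists_isMinTransversal_inter_subset_singleton (hE : SpernerHG E)
    {e : Finset V} (he : e ∈ E) {x : V} (hx : x ∈ e) :
    ∃ T, IsMinTransversal E T ∧ T ∩ e ⊆ {x} := by
  have hT : IsTransversal E (insert x (univ \ e)) := by
    intro f hf
    by_cases hfe : f ⊆ e
    · exact ⟨x, mem_inter.2 ⟨hE f hf e he hfe ▸ hx, mem_insert_self x _⟩⟩
    · obtain ⟨y, hyf, hye⟩ := not_subset.1 hfe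
      exact ⟨y, mem_inter.2 ⟨hyf, mem_insert_of_mem (mem_sdiff.2 ⟨mem_univ y, hye⟩)⟩⟩
  obtain ⟨T, hTsub, hT⟩ := hT.exists_isMinTransversal_subset
  refine ⟨T, hT, fun y hy => ?_⟩
  rw [mem_inter] at hy
  simpa [hy.2] using hTsub hy.1

lemma SpernerHG.isMinTransversal_dualHG_of_mem (hE : SpernerHG E) {e : Finset V} (he : e ∈ E) :
    IsMinTransversal (dualHG E) e := by
  refine ⟨isTransversal_dualHG_of_mem he, fun S hSe hS => ?_⟩
  by_contra hne
  obtain ⟨x, hxe, hxS⟩ := not_subset.1 fun h => hne (hSe.antisymm h)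
  obtain ⟨T, hT, hTe⟩ := hE.exists_isMinTransversal_inter_subset_singleton he hxe
  obtain ⟨y, hy⟩ := hS T (mem_dualHG.2 hT)
  rw [mem_inter] at hy
  have hyx : y = x := mem_singleton.1 (hTe (mem_inter.2 ⟨hy.1, hSe hy.2⟩))
  exact hxS (hyx ▸ hy.2)

theorem SpernerHG.dualHG_dualHG (hE : SpernerHG E) : dualHG (dualHG E) = E := by
  ext T
  rw [mem_dualHG]
  refine ⟨fun hT => ?_, hE.isMinTransversal_dualHG_of_mem⟩
  obtain ⟨e, he, heT⟩ := hT.1.exists_mem_subset_of_dualHG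
  rwa [← hT.2 e heT (isTransversal_dualHG_of_mem he)]

end Transversals

section Cliques

variable {G : SimpleGraph V} {C : Finset V}

noncomputable def maxCliques (G : SimpleGraph V) : Finset (Finset V) :=
  univ.filter (IsMaxClique G)

omit [DecidableEq V] in
lemma mem_maxCliques : C ∈ maxCliques G ↔ IsMaxClique G C := by
  simp [maxCliques]

omit [Fintype V] [DecidableEq V] in
lemma isMaxClique_iff_maximal :
    IsMaxClique G C ↔ Maximal (fun D : Finset V => G.IsClique (D : Set V)) C := by
  rw [IsMaxClique, maximal_iff]
  exact and_congr_right fun _ =>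
    ⟨fun h _ hD hCD => (h _ hD hCD).symm, fun h _ hD hCD => (h hD hCD).symm⟩

omit [DecidableEq V] in
lemma exists_isMaxClique_superset (hC : G.IsClique (C : Set V)) :
    ∃ D, C ⊆ D ∧ IsMaxClique G D := by
  simpa only [isMaxClique_iff_maximal] using exists_maximal_ge_of_wellFoundedGT _ C hC

omit [Fintype V] in
lemma IsMaxClique.mem_of_forall_adj (hC : IsMaxClique G C) {v : V}
    (hv : ∀ u, u ≠ v → G.Adj v u) : v ∈ C := by
  have hvC : G.IsClique ((insert v C : Finset V) : Set V) := by
    rw [coe_insert]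
    exact hC.1.insert fun u _ hvu => hv u hvu.symm
  exact hC.2 _ hvC (subset_insert v C) ▸ mem_insert_self v C

omit [DecidableEq V] in
lemma spernerHG_maxCliques (G : SimpleGraph V) : SpernerHG (maxCliques G) :=
  fun _ hC _ hD hCD => ((mem_maxCliques.1 hC).2 _ (mem_maxCliques.1 hD).1 hCD).symm

lemma isMinCliqueTransversal_iff_mem_dualHG {X : Finset V} :
    IsMinCliqueTransversal G X ↔ X ∈ dualHG (maxCliques G) := by
  simp only [mem_dualHG, IsMinCliqueTransversal, IsMinTransversal, IsCliqueTransversal,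
    IsTransversal, mem_maxCliques]

lemma uct_eq_sup_card_dualHG_maxCliques : uct G = (dualHG (maxCliques G)).sup card := by
  simp only [uct, isMinCliqueTransversal_iff_mem_dualHG, filter_mem_eq_inter, univ_inter]

lemma coocGraph_maxCliques (G : SimpleGraph V) : coocGraph (maxCliques G) = G := by
  ext u v
  refine ⟨fun ⟨_, C, hC, hu, hv⟩ => ?_, fun huv => ?_⟩
  · exact (mem_maxCliques.1 hC).1 hu hv ‹u ≠ v›
  · obtain ⟨D, huvD, hD⟩ := exists_isMaxClique_superset (G := G) (C := {u, v})
      (by rw [coe_pair]; exact SimpleGraph.isClique_pair.2 fun _ => huv)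
    exact ⟨huv.ne, D, mem_maxCliques.2 hD, huvD (mem_insert_self u _),
      huvD (mem_insert_of_mem (mem_singleton_self v))⟩

omit [Fintype V] [DecidableEq V] in
lemma isClique_coocGraph_of_mem {F : Finset (Finset V)} (hC : C ∈ F) :
    (coocGraph F).IsClique (C : Set V) :=
  fun _ hu _ hv huv => ⟨huv, C, hC, hu, hv⟩

omit [DecidableEq V] in
lemma SpernerHG.conformalHG_iff {F : Finset (Finset V)} (hF : SpernerHG F) :
    ConformalHG F ↔ maxCliques (coocGraph F) = F := by
  refine ⟨fun hconf => ?_, fun h C hC => h ▸ mem_maxCliques.2 hC⟩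
  ext C
  refine ⟨fun hC => hconf C (mem_maxCliques.1 hC), fun hC => ?_⟩
  obtain ⟨D, hCD, hD⟩ := exists_isMaxClique_superset (isClique_coocGraph_of_mem hC)
  rwa [mem_maxCliques, hF C hC D (hconf D hD) hCD]

end Cliques

/-- A 2-uniform hypergraph `H` is dually conformal iff there is a graph
`G` on `V(H)` with `τ_c^+(G) = 2` and no universal vertices whose minimal clique
transversals are exactly the hyperedges of `H`. -/
theorem two_uniform_dually_conformal_iff [Nonempty V] (E : Finset (Finset V))
    (hcov : Covers E) (h2 : ∀ e ∈ E, e.card = 2) :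
    DuallyConformalHG E ↔
      ∃ G : SimpleGraph V, uct G = 2 ∧ (∀ v : V, ∃ u : V, u ≠ v ∧ ¬ G.Adj v u) ∧
        ∀ X : Finset V, X ∈ E ↔ IsMinCliqueTransversal G X := by
  have hE : SpernerHG E := fun e he f hf hef =>
    eq_of_subset_of_card_le hef (by rw [h2 e he, h2 f hf])
  rw [DuallyConformalHG, (spernerHG_dualHG E).conformalHG_iff]
  constructor
  · intro hconf
    set G := coocGraph (dualHG E)
    refine ⟨G, ?_, fun v => ?_, fun X => ?_⟩
    · obtain ⟨e, he, -⟩ := hcov (Classical.arbitrary V)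
      rw [uct_eq_sup_card_dualHG_maxCliques, hconf, hE.dualHG_dualHG, sup_congr rfl h2,
        sup_const ⟨e, he⟩]
    · by_contra! hv
      obtain ⟨T, hT, hvT⟩ :=
        exists_isMinTransversal_not_mem fun e he => exists_mem_ne (h2 e he ▸ one_lt_two) v
      rw [← mem_dualHG, ← hconf, mem_maxCliques] at hT
      exact hvT (hT.mem_of_forall_adj hv)
    · rw [isMinCliqueTransversal_iff_mem_dualHG, hconf, hE.dualHG_dualHG]
  · rintro ⟨G, -, -, hG⟩
    have hdual : dualHG (maxCliques G) = E := by
      ext X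
      rw [← isMinCliqueTransversal_iff_mem_dualHG, hG]
    rw [← hdual, (spernerHG_maxCliques G).dualHG_dualHG, coocGraph_maxCliques]
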